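/- arXiv:2403.15842 — 3 statements merged into one kernel-verified Lean document; each statement's English description precedes it below -/
import Mathlib

section
/- Let 𝒞 be a cluster system on a nonempty finite set X. The restriction of the Shapley value SV to 𝕡𝔻(𝒞) is additive (Ψ(g₁+g₂) = Ψ(g₁)+Ψ(g₂) for all g₁, g₂ ∈ 𝕡𝔻(𝒞)), Pareto efficient (Σ_{x∈X} (Ψ(g))(x) = g(X) for all g ∈ 𝕡𝔻(𝒞)), and group proportional ((Ψ(a·g_C))(x) = a/|C| if x ∈ C and 0 if x ∉ C, for all C ∈ 𝒞 and a ∈ ℝ). Moreover, it is the unique map Ψ : 𝕡𝔻(𝒞) → ℝ^X with these three properties. -/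
open Finset

/-- The game `g_C` associated with a nonempty subset `C ⊆ X`:
`g_C(M) = 1` if `C ∩ M ≠ ∅` and `g_C(M) = 0` otherwise. -/
noncomputable def gC {α : Type*} [DecidableEq α] (C : Finset α) : Finset α → ℝ :=
  fun M => if (C ∩ M).Nonempty then 1 else 0

/-- The set `𝕡𝔻(𝒞)` of games arising as `PD_ω` for some weighting `ω` of `𝒞`,
where `PD_ω(M) = ∑_{C ∈ 𝒞, M ∩ C ≠ ∅} ω(C)`. -/
def PDset {α : Type*} [DecidableEq α] (𝒞 : Finset (Finset α)) :
    Set (Finset α → ℝ) :=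
  {g | ∃ ω : ↥𝒞 → ℝ, g = fun M => ∑ C : ↥𝒞, if (M ∩ C.1).Nonempty then ω C else 0}

/-- The Shapley value of a game `g : 𝒫(X) → ℝ`. -/
noncomputable def SV {α : Type*} [Fintype α] [DecidableEq α]
    (g : Finset α → ℝ) (x : α) : ℝ :=
  (1 / (Nat.factorial (Fintype.card α) : ℝ)) *
    ∑ M ∈ Finset.univ.filter (fun M : Finset α => x ∈ M),
      (Nat.factorial (M.card - 1) : ℝ) * (Nat.factorial (Fintype.card α - M.card) : ℝ) *
        (g M - g (M.erase x))

/-!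
The Shapley value is linear in the game, and the games of `𝕡𝔻(𝒞)` are exactly the combinations
`∑_C ω(C) • g_C`. For `g_C` a player outside `C` is a dummy, while `x ∈ C` is pivotal exactly in
the coalitions `{x} ∪ S` with `S ⊆ X ∖ C`; grouping these by `|S|`, their Shapley weights add up
to `1/|C|` by the hockey-stick identity. Additivity, efficiency and group proportionality follow by
linearity. Conversely, an additive map on `𝕡𝔻(𝒞)` is additive on finite sums, so group
proportionality fixes its value on every `ω(C) • g_C`, hence on all of `𝕡𝔻(𝒞)`.
-/

open Nat

theorem succ_mul_sum_choose_mul_factorial_mul_factorial (m d : ℕ) :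
    (d + 1) * ∑ k ∈ range (m + 1), m.choose k * (k ! * (m - k + d)!) = (m + d + 1)! := by
  have hterm : ∀ k ∈ range (m + 1),
      m.choose k * (k ! * (m - k + d)!) = m ! * d ! * (m - k + d).choose d := by
    intro k hk
    rw [← add_choose_mul_factorial_mul_factorial (m - k) d,
      ← choose_mul_factorial_mul_factorial (Nat.lt_succ_iff.mp (mem_range.mp hk))]
    ring
  have hockey : ∑ k ∈ range (m + 1), (m - k + d).choose d = (m + d + 1).choose (d + 1) :=
    (sum_range_reflect (fun i => (i + d).choose d) (m + 1)).trans (sum_range_add_choose m d)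
  rw [sum_congr rfl hterm, ← mul_sum, hockey, add_assoc m d 1,
    ← add_choose_mul_factorial_mul_factorial m (d + 1), factorial_succ]
  ring

section Games

variable {α : Type*} [DecidableEq α]

theorem gC_sub_gC_erase_of_notMem {C : Finset α} {x : α} (hx : x ∉ C) (M : Finset α) :
    gC C M - gC C (M.erase x) = 0 := by
  rw [gC, gC, inter_erase, erase_eq_of_notMem (fun h => hx (mem_inter.1 h).1), sub_self]

theorem gC_sub_gC_erase_of_mem {C : Finset α} {x : α} (hx : x ∈ C) (M : Finset α) :
    gC C M - gC C (M.erase x) = if C ∩ M = {x} then 1 else 0 := by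
  rw [gC, gC, inter_erase]
  by_cases hxM : x ∈ M
  · have hxCM : x ∈ C ∩ M := mem_inter.2 ⟨hx, hxM⟩
    have hne : (C ∩ M).Nonempty := ⟨x, hxCM⟩
    simp only [hne, erase_nonempty hxCM, nontrivial_iff_ne_singleton hxCM]
    by_cases h : C ∩ M = {x} <;> simp [h]
  · have hxCM : x ∉ C ∩ M := fun h => hxM (mem_inter.1 h).2
    rw [erase_eq_of_notMem hxCM, sub_self,
      if_neg fun h : C ∩ M = {x} => hxCM (h ▸ mem_singleton_self x)]

end Games

section Shapley

variable {α : Type*} [Fintype α] [DecidableEq α]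

theorem SV_add (g₁ g₂ : Finset α → ℝ) : SV (g₁ + g₂) = SV g₁ + SV g₂ := by
  ext x
  simp only [SV, Pi.add_apply, ← mul_add, ← sum_add_distrib]
  congr 1
  exact sum_congr rfl fun M _ => by ring

theorem SV_smul (a : ℝ) (g : Finset α → ℝ) : SV (a • g) = a • SV g := by
  ext x
  simp only [SV, Pi.smul_apply, smul_eq_mul, mul_sum, mul_left_comm a]
  exact sum_congr rfl fun M _ => by ring

variable (α) in
noncomputable def SVLinearMap : (Finset α → ℝ) →ₗ[ℝ] α → ℝ where
  toFun := SV
  map_add' := SV_add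
  map_smul' := SV_smul

theorem sum_filter_inter_eq_singleton {β : Type*} [AddCommMonoid β] {C : Finset α} {x : α}
    (hx : x ∈ C) (f : Finset α → β) :
    ∑ M ∈ univ.filter (fun M => C ∩ M = {x}), f M = ∑ S ∈ Cᶜ.powerset, f (insert x S) := by
  have mem_of_inter_eq {M : Finset α} (h : C ∩ M = {x}) : x ∈ M :=
    (mem_inter.1 (h ▸ mem_singleton_self x)).2
  refine sum_nbij' (fun M => M.erase x) (insert x) ?_ ?_ ?_ ?_ ?_
  · intro M hM
    refine mem_powerset.2 fun y hy => mem_compl.2 fun hyC => ?_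
    rw [mem_erase] at hy
    exact hy.1 (mem_singleton.1 ((mem_filter.1 hM).2 ▸ mem_inter.2 ⟨hyC, hy.2⟩))
  · intro S hS
    have hCS : C ∩ S = ∅ := disjoint_iff_inter_eq_empty.1
      (subset_compl_iff_disjoint_left.1 (mem_powerset.1 hS))
    simp [inter_insert_of_mem hx, hCS]
  · intro M hM
    exact insert_erase (mem_of_inter_eq (mem_filter.1 hM).2)
  · intro S hS
    exact erase_insert fun hxS => mem_compl.1 (mem_powerset.1 hS hxS) hx
  · intro M hM
    rw [insert_erase (mem_of_inter_eq (mem_filter.1 hM).2)]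

theorem SV_gC_of_mem {C : Finset α} {x : α} (hx : x ∈ C) : SV (gC C) x = 1 / #C := by
  obtain ⟨d, hd⟩ : ∃ d, #C = d + 1 := exists_eq_succ_of_ne_zero (card_ne_zero_of_mem hx)
  set n := Fintype.card α
  set m := #Cᶜ
  have hn : n = m + d + 1 := by
    have := card_le_univ C
    have : m = n - #C := card_compl C
    omega
  have hsum : ∑ M ∈ univ.filter (fun M => x ∈ M),
      ((#M - 1)! : ℝ) * ((n - #M)! : ℝ) * (gC C M - gC C (M.erase x))
        = ((∑ k ∈ range (m + 1), m.choose k * (k ! * (m - k + d)!) : ℕ) : ℝ) :=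
    calc _ = ∑ M ∈ univ.filter (fun M => C ∩ M = {x}), ((#M - 1)! : ℝ) * ((n - #M)! : ℝ) := by
          simp only [gC_sub_gC_erase_of_mem hx, mul_ite, mul_one, mul_zero]
          rw [← sum_filter, filter_filter]
          refine sum_congr (filter_congr fun M _ => ?_) fun _ _ => rfl
          exact and_iff_right_of_imp fun h => (mem_inter.1 (h ▸ mem_singleton_self x)).2
      _ = ∑ S ∈ Cᶜ.powerset, ((#S)! : ℝ) * ((n - 1 - #S)! : ℝ) := by
          rw [sum_filter_inter_eq_singleton hx]
          refine sum_congr rfl fun S hS => ?_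
          rw [card_insert_of_notMem fun hxS => mem_compl.1 (mem_powerset.1 hS hxS) hx]
          simp only [add_tsub_cancel_right, Nat.sub_sub, add_comm 1]
      _ = _ := by
          rw [sum_powerset_apply_card (fun k => (k ! : ℝ) * ((n - 1 - k)! : ℝ))]
          push_cast
          refine sum_congr rfl fun k hk => ?_
          have : n - 1 - k = m - k + d := by have := mem_range.1 hk; omega
          rw [this, nsmul_eq_mul]
  have key := succ_mul_sum_choose_mul_factorial_mul_factorial m d
  have hS : ((∑ k ∈ range (m + 1), m.choose k * (k ! * (m - k + d)!) : ℕ) : ℝ) ≠ 0 :=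
    Nat.cast_ne_zero.2 (right_ne_zero_of_mul (key.trans_ne (factorial_ne_zero _)))
  rw [SV, hsum, hd, show Fintype.card α = m + d + 1 from hn, ← key, Nat.cast_mul]
  field_simp

theorem SV_gC_of_notMem {C : Finset α} {x : α} (hx : x ∉ C) : SV (gC C) x = 0 := by
  simp [SV, gC_sub_gC_erase_of_notMem hx]

theorem SV_smul_gC (a : ℝ) (C : Finset α) (x : α) :
    SV (a • gC C) x = if x ∈ C then a / #C else 0 := by
  rw [SV_smul, Pi.smul_apply, smul_eq_mul]
  split_ifs with hx
  · rw [SV_gC_of_mem hx, mul_one_div]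
  · rw [SV_gC_of_notMem hx, mul_zero]

theorem sum_SV_smul_gC (a : ℝ) (C : Finset α) : ∑ x, SV (a • gC C) x = (a • gC C) univ := by
  simp only [SV_smul_gC, sum_ite_mem, univ_inter, inter_univ, sum_const, nsmul_eq_mul,
    Pi.smul_apply, smul_eq_mul, gC]
  rcases C.eq_empty_or_nonempty with rfl | hC
  · simp
  · rw [if_pos hC]
    field_simp

theorem SV_sum {ι : Type*} (s : Finset ι) (f : ι → Finset α → ℝ) :
    SV (∑ i ∈ s, f i) = ∑ i ∈ s, SV (f i) :=
  map_sum (SVLinearMap α) f s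

end Shapley

theorem map_sum_of_map_add {M β : Type*} [AddCommMonoid M] [AddCancelCommMonoid β] {S : Set M}
    (zero_mem : (0 : M) ∈ S) (add_mem : ∀ a ∈ S, ∀ b ∈ S, a + b ∈ S) (Ψ : S → β)
    (map_add : ∀ (a b : M) (ha : a ∈ S) (hb : b ∈ S) (hab : a + b ∈ S),
      Ψ ⟨a + b, hab⟩ = Ψ ⟨a, ha⟩ + Ψ ⟨b, hb⟩)
    {ι : Type*} (s : Finset ι) (f : ι → M) (hf : ∀ i, f i ∈ S) (hs : ∑ i ∈ s, f i ∈ S) :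
    Ψ ⟨∑ i ∈ s, f i, hs⟩ = ∑ i ∈ s, Ψ ⟨f i, hf i⟩ := by
  classical
  have sum_mem (t : Finset ι) : ∑ i ∈ t, f i ∈ S := by
    induction t using Finset.induction_on with
    | empty => simpa using zero_mem
    | insert i t hi ih => rw [sum_insert hi]; exact add_mem _ (hf i) _ ih
  induction s using Finset.induction_on with
  | empty =>
    have h := map_add 0 0 zero_mem zero_mem (by simpa using zero_mem)
    simp only [add_zero, left_eq_add] at h
    simpa using h
  | insert i t hi ih =>
    have hsplit : (⟨∑ j ∈ insert i t, f j, hs⟩ : S) =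
        ⟨f i + ∑ j ∈ t, f j, add_mem _ (hf i) _ (sum_mem t)⟩ := Subtype.ext (sum_insert hi)
    rw [hsplit, map_add _ _ (hf i) (sum_mem t), ih, sum_insert hi]

section ClusterGames

variable {α : Type*} [DecidableEq α] {𝒞 : Finset (Finset α)}

theorem PDset_game_eq_sum_smul_gC (ω : ↥𝒞 → ℝ) :
    (fun M => ∑ C : ↥𝒞, if (M ∩ C.1).Nonempty then ω C else 0) = ∑ C : ↥𝒞, ω C • gC C.1 := by
  ext M
  simp [gC, inter_comm M]

theorem mem_PDset_iff {g : Finset α → ℝ} :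
    g ∈ PDset 𝒞 ↔ ∃ ω : ↥𝒞 → ℝ, g = ∑ C : ↥𝒞, ω C • gC C.1 := by
  simp only [PDset, Set.mem_ofPred_eq, PDset_game_eq_sum_smul_gC]

theorem zero_mem_PDset : (0 : Finset α → ℝ) ∈ PDset 𝒞 :=
  mem_PDset_iff.2 ⟨0, by simp⟩

theorem add_mem_PDset {g₁ g₂ : Finset α → ℝ} (h₁ : g₁ ∈ PDset 𝒞) (h₂ : g₂ ∈ PDset 𝒞) :
    g₁ + g₂ ∈ PDset 𝒞 := by
  obtain ⟨ω₁, rfl⟩ := mem_PDset_iff.1 h₁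
  obtain ⟨ω₂, rfl⟩ := mem_PDset_iff.1 h₂
  exact mem_PDset_iff.2 ⟨ω₁ + ω₂, by simp [add_smul, sum_add_distrib]⟩

theorem smul_gC_mem_PDset {C : Finset α} (hC : C ∈ 𝒞) (a : ℝ) : a • gC C ∈ PDset 𝒞 :=
  mem_PDset_iff.2 ⟨Pi.single ⟨C, hC⟩ a, by simp [Pi.single_apply, ite_smul]⟩

theorem sum_SV_of_mem_PDset [Fintype α] {g : Finset α → ℝ} (hg : g ∈ PDset 𝒞) :
    ∑ x, SV g x = g univ := by
  obtain ⟨ω, rfl⟩ := mem_PDset_iff.1 hg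
  simp only [SV_sum, Finset.sum_apply]
  rw [sum_comm]
  exact sum_congr rfl fun C _ => sum_SV_smul_gC (ω C) C.1

end ClusterGames

theorem stmt7_general {α : Type*} [Fintype α] [DecidableEq α]
    (𝒞 : Finset (Finset α)) :
    -- additivity of SV on 𝕡𝔻(𝒞)
    (∀ g₁ g₂ : Finset α → ℝ, g₁ ∈ PDset 𝒞 → g₂ ∈ PDset 𝒞 →
        SV (g₁ + g₂) = SV g₁ + SV g₂)
    -- Pareto efficiency of SV on 𝕡𝔻(𝒞)
    ∧ (∀ g ∈ PDset 𝒞, ∑ x : α, SV g x = g Finset.univ)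
    -- group proportionality of SV
    ∧ (∀ C ∈ 𝒞, ∀ (a : ℝ) (x : α),
        SV (a • gC C) x = if x ∈ C then a / (C.card : ℝ) else 0)
    -- uniqueness
    ∧ (∀ Ψ : ↥(PDset 𝒞) → α → ℝ,
        (∀ (g₁ g₂ : Finset α → ℝ) (h₁ : g₁ ∈ PDset 𝒞) (h₂ : g₂ ∈ PDset 𝒞)
            (h₁₂ : g₁ + g₂ ∈ PDset 𝒞),
          Ψ ⟨g₁ + g₂, h₁₂⟩ = Ψ ⟨g₁, h₁⟩ + Ψ ⟨g₂, h₂⟩) →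
        (∀ (g : Finset α → ℝ) (hg : g ∈ PDset 𝒞),
          ∑ x : α, Ψ ⟨g, hg⟩ x = g Finset.univ) →
        (∀ (C : Finset α) (_ : C ∈ 𝒞) (a : ℝ) (h : a • gC C ∈ PDset 𝒞) (x : α),
          Ψ ⟨a • gC C, h⟩ x = if x ∈ C then a / (C.card : ℝ) else 0) →
        ∀ (g : Finset α → ℝ) (hg : g ∈ PDset 𝒞), Ψ ⟨g, hg⟩ = SV g) := by
  refine ⟨fun g₁ g₂ _ _ => SV_add g₁ g₂, fun g hg => sum_SV_of_mem_PDset hg,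
    fun C _ a x => SV_smul_gC a C x, ?_⟩
  intro Ψ map_add _ proportional g hg
  obtain ⟨ω, rfl⟩ := mem_PDset_iff.1 hg
  have smul_mem (C : ↥𝒞) : ω C • gC C.1 ∈ PDset 𝒞 := smul_gC_mem_PDset C.2 (ω C)
  rw [map_sum_of_map_add zero_mem_PDset (fun _ h₁ _ h₂ => add_mem_PDset h₁ h₂) Ψ map_add univ _
    smul_mem, SV_sum]
  refine sum_congr rfl fun C _ => funext fun x => ?_
  rw [proportional C.1 C.2 (ω C) (smul_mem C) x, SV_smul_gC]

/-- The restriction of the Shapley value to `𝕡𝔻(𝒞)` is additive, Pareto efficient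
and group proportional, and it is the unique map `Ψ : 𝕡𝔻(𝒞) → ℝ^X` with these
three properties. -/
theorem stmt7 {α : Type*} [Fintype α] [DecidableEq α] [Nonempty α]
    (𝒞 : Finset (Finset α)) (h𝒞 : 𝒞.Nonempty) (h𝒞' : ∀ C ∈ 𝒞, C.Nonempty) :
    -- additivity of SV on 𝕡𝔻(𝒞)
    (∀ g₁ g₂ : Finset α → ℝ, g₁ ∈ PDset 𝒞 → g₂ ∈ PDset 𝒞 →
        SV (g₁ + g₂) = SV g₁ + SV g₂)
    -- Pareto efficiency of SV on 𝕡𝔻(𝒞)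
    ∧ (∀ g ∈ PDset 𝒞, ∑ x : α, SV g x = g Finset.univ)
    -- group proportionality of SV
    ∧ (∀ C ∈ 𝒞, ∀ (a : ℝ) (x : α),
        SV (a • gC C) x = if x ∈ C then a / (C.card : ℝ) else 0)
    -- uniqueness
    ∧ (∀ Ψ : ↥(PDset 𝒞) → α → ℝ,
        (∀ (g₁ g₂ : Finset α → ℝ) (h₁ : g₁ ∈ PDset 𝒞) (h₂ : g₂ ∈ PDset 𝒞)
            (h₁₂ : g₁ + g₂ ∈ PDset 𝒞),
          Ψ ⟨g₁ + g₂, h₁₂⟩ = Ψ ⟨g₁, h₁⟩ + Ψ ⟨g₂, h₂⟩) →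
        (∀ (g : Finset α → ℝ) (hg : g ∈ PDset 𝒞),
          ∑ x : α, Ψ ⟨g, hg⟩ x = g Finset.univ) →
        (∀ (C : Finset α) (_ : C ∈ 𝒞) (a : ℝ) (h : a • gC C ∈ PDset 𝒞) (x : α),
          Ψ ⟨a • gC C, h⟩ x = if x ∈ C then a / (C.card : ℝ) else 0) →
        ∀ (g : Finset α → ℝ) (hg : g ∈ PDset 𝒞), Ψ ⟨g, hg⟩ = SV g) :=
  stmt7_general 𝒞
end

section
/- Let 𝒮 be a split system on a nonempty finite set X, let FP be the fair proportion index on the cluster system 𝒞(𝒮), and let τ : 𝕃(𝒮) → 𝕃(𝒞(𝒮)) be defined by (τ(λ))(C) = (|X∖C|/|X|)·λ(C|(X∖C)) for each C ∈ 𝒞(𝒮). Then FP(τ(λ)) = SV(PD_λ) holds for all λ ∈ 𝕃(𝒮), where SV is the Shapley value. -/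
open Finset

/-- A split of `X`: an unordered bipartition `{A, B}` of `X` into two nonempty parts. -/
def IsSplit {α : Type*} [Fintype α] [DecidableEq α] (S : Finset (Finset α)) : Prop :=
  ∃ A B : Finset α, A.Nonempty ∧ B.Nonempty ∧ A ∪ B = Finset.univ ∧ A ∩ B = ∅ ∧
    S = {A, B}

/-- The cluster system `𝒞(𝒮)` associated with a split system `𝒮`:
the union of the parts of the splits in `𝒮`. -/
def Cl {α : Type*} [DecidableEq α] (𝒮 : Finset (Finset (Finset α))) :
    Finset (Finset α) :=
  𝒮.biUnion id

/-- The fair proportion index on a cluster system `𝒞` on `α`. -/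
noncomputable def FPfun {α : Type*} [Fintype α] [DecidableEq α] (𝒞 : Finset (Finset α))
    (ω : ↥𝒞 → ℝ) (x : α) : ℝ :=
  ∑ C : ↥𝒞, if x ∈ C.1 then ω C / (C.1.card : ℝ) else 0

/-- The game `PD_λ` for a weighting `λ` of a split system `𝒮`. -/
noncomputable def PDs {α : Type*} [DecidableEq α] (𝒮 : Finset (Finset (Finset α)))
    (lam : ↥𝒮 → ℝ) (M : Finset α) : ℝ :=
  ∑ S : ↥𝒮, if ∀ A ∈ S.1, (A ∩ M).Nonempty then lam S else 0

lemma tele (a b : ℕ) (ha : 1 ≤ a) (hb : 1 ≤ b) :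
    (a : ℝ) * ∑ j ∈ Finset.range b,
        ((b.choose (j+1) * (j+1).factorial * (a + b - 2 - j).factorial : ℕ) : ℝ)
      = ((b * (a + b - 1).factorial : ℕ) : ℝ) := by
  set V : ℕ → ℝ := fun j => ((b.descFactorial (j+1) * (a + b - 1 - j).factorial : ℕ) : ℝ) with hV
  have step : ∀ j ∈ Finset.range b,
      (a : ℝ) * ((b.choose (j+1) * (j+1).factorial * (a + b - 2 - j).factorial : ℕ) : ℝ)
        = V j - V (j+1) := by
    intro j hj
    rw [Finset.mem_range] at hj
    obtain ⟨r, hr⟩ : ∃ r, b = j + 1 + r := ⟨b - (j+1), by omega⟩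
    obtain ⟨s, hs⟩ : ∃ s, a = s + 1 := ⟨a - 1, by omega⟩
    subst hr hs
    have h1 : s + 1 + (j + 1 + r) - 2 - j = s + r := by omega
    have h2 : s + 1 + (j + 1 + r) - 1 - j = s + r + 1 := by omega
    have h3 : s + 1 + (j + 1 + r) - 1 - (j + 1) = s + r := by omega
    have h4 : (j + 1 + r).descFactorial (j + 1 + 1) = r * (j + 1 + r).descFactorial (j + 1) := by
      rw [Nat.descFactorial_succ]; congr 1; omega
    have h5 : (j + 1 + r).descFactorial (j + 1) = (j+1).factorial * (j + 1 + r).choose (j+1) :=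
      Nat.descFactorial_eq_factorial_mul_choose _ _
    rw [hV]
    simp only [h1, h2, h3, h4, h5, Nat.factorial_succ]
    push_cast
    ring
  rw [Finset.mul_sum, Finset.sum_congr rfl step, Finset.sum_range_sub' V b]
  have hV0 : V 0 = ((b * (a + b - 1).factorial : ℕ) : ℝ) := by
    simp [hV, Nat.descFactorial]
  have hVb : V b = 0 := by
    simp [hV, Nat.descFactorial_eq_zero_iff_lt.mpr (Nat.lt_succ_self b)]
  rw [hV0, hVb, sub_zero]

lemma shapley_split {α : Type*} [Fintype α] [DecidableEq α] (A : Finset α) (x : α)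
    (hx : x ∈ A) (hAc : Aᶜ.Nonempty) :
    SV (fun M => if (A ∩ M).Nonempty ∧ (Aᶜ ∩ M).Nonempty then (1:ℝ) else 0) x
      = (Aᶜ.card : ℝ) / ((Fintype.card α : ℝ) * (A.card : ℝ)) := by
  classical
  set n := Fintype.card α with hn
  set a := A.card with hacard
  set b := Aᶜ.card with hbcard
  have hab : a + b = n := by
    rw [hacard, hbcard, hn]; exact A.card_add_card_compl
  have ha1 : 1 ≤ a := Finset.card_pos.mpr ⟨x, hx⟩
  have hb1 : 1 ≤ b := Finset.card_pos.mpr hAc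
  -- Step 1: summand simplification
  have step1 : ∀ M ∈ Finset.univ.filter (fun M : Finset α => x ∈ M),
      (Nat.factorial (M.card - 1) : ℝ) * (Nat.factorial (n - M.card) : ℝ) *
        ((if (A ∩ M).Nonempty ∧ (Aᶜ ∩ M).Nonempty then (1:ℝ) else 0) -
         (if (A ∩ M.erase x).Nonempty ∧ (Aᶜ ∩ M.erase x).Nonempty then (1:ℝ) else 0))
      = if A ∩ M = {x} ∧ (Aᶜ ∩ M).Nonempty then
          (Nat.factorial (M.card - 1) : ℝ) * (Nat.factorial (n - M.card) : ℝ) else 0 := by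
    intro M hM
    rw [Finset.mem_filter] at hM
    have hxM : x ∈ M := hM.2
    have hxAM : x ∈ A ∩ M := Finset.mem_inter.mpr ⟨hx, hxM⟩
    have hAM : (A ∩ M).Nonempty := ⟨x, hxAM⟩
    have hcompl : Aᶜ ∩ M.erase x = Aᶜ ∩ M := by
      ext y; simp only [Finset.mem_inter, Finset.mem_erase, Finset.mem_compl]
      constructor
      · rintro ⟨hy, _, hyM⟩; exact ⟨hy, hyM⟩
      · rintro ⟨hy, hyM⟩; exact ⟨hy, fun h => hy (h ▸ hx), hyM⟩
    rw [hcompl]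
    have herase : A ∩ M.erase x = (A ∩ M).erase x := by
      ext y; simp only [Finset.mem_inter, Finset.mem_erase]; tauto
    by_cases hB : (Aᶜ ∩ M).Nonempty
    · rw [if_pos ⟨hAM, hB⟩]
      by_cases hsing : A ∩ M = {x}
      · have h7 : ¬ (A ∩ M.erase x).Nonempty := by
          rw [herase, hsing, Finset.erase_singleton]
          exact Finset.not_nonempty_empty
        rw [if_neg (fun h => h7 h.1), if_pos ⟨hsing, hB⟩]
        ring
      · have h7 : (A ∩ M.erase x).Nonempty := by
          rw [herase]
          have hnt : (A ∩ M).Nontrivial :=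
            (Finset.eq_singleton_or_nontrivial hxAM).resolve_left hsing
          obtain ⟨y, hy, hyx⟩ := hnt.exists_ne x
          exact ⟨y, Finset.mem_erase.mpr ⟨hyx, Finset.mem_coe.mp hy⟩⟩
        rw [if_pos ⟨h7, hB⟩, if_neg (fun h => hsing h.1)]
        ring
    · rw [if_neg (fun h => hB h.2), if_neg (fun h => hB h.2), if_neg (fun h => hB h.2)]
      ring
  rw [SV, Finset.sum_congr rfl step1]
  -- Step 2: reduce to a sum over nonempty subsets of Aᶜ
  have step2 : ∑ M ∈ Finset.univ.filter (fun M : Finset α => x ∈ M),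
      (if A ∩ M = {x} ∧ (Aᶜ ∩ M).Nonempty then
          (Nat.factorial (M.card - 1) : ℝ) * (Nat.factorial (n - M.card) : ℝ) else 0)
      = ∑ M ∈ Finset.univ.filter (fun M : Finset α => A ∩ M = {x} ∧ (Aᶜ ∩ M).Nonempty),
          (Nat.factorial (M.card - 1) : ℝ) * (Nat.factorial (n - M.card) : ℝ) := by
    rw [Finset.sum_filter, Finset.sum_filter]
    apply Finset.sum_congr rfl
    intro M _
    by_cases hxM : x ∈ M
    · simp [hxM]
    · have : ¬ (A ∩ M = {x} ∧ (Aᶜ ∩ M).Nonempty) := by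
        rintro ⟨h1, _⟩
        exact hxM (Finset.mem_inter.mp (h1 ▸ Finset.mem_singleton_self x)).2
      simp [hxM, this]
  rw [step2]
  -- Step 3: bijection M ↦ M.erase x with nonempty subsets of Aᶜ
  have step3 : ∑ M ∈ Finset.univ.filter (fun M : Finset α => A ∩ M = {x} ∧ (Aᶜ ∩ M).Nonempty),
        (Nat.factorial (M.card - 1) : ℝ) * (Nat.factorial (n - M.card) : ℝ)
      = ∑ T ∈ Aᶜ.powerset.filter (fun T => T.Nonempty),
          (Nat.factorial T.card : ℝ) * (Nat.factorial (n - 1 - T.card) : ℝ) := by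
    apply Finset.sum_nbij' (fun M => M.erase x) (fun T => insert x T)
    · intro M hM
      rw [Finset.mem_filter] at hM
      obtain ⟨_, hAM, hBM⟩ := hM
      rw [Finset.mem_filter, Finset.mem_powerset]
      constructor
      · intro y hy
        rw [Finset.mem_erase] at hy
        rw [Finset.mem_compl]
        intro hyA
        have : y ∈ A ∩ M := Finset.mem_inter.mpr ⟨hyA, hy.2⟩
        rw [hAM, Finset.mem_singleton] at this
        exact hy.1 this
      · obtain ⟨y, hy⟩ := hBM
        rw [Finset.mem_inter, Finset.mem_compl] at hy
        exact ⟨y, Finset.mem_erase.mpr ⟨fun h => hy.1 (h ▸ hx), hy.2⟩⟩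
    · intro T hT
      rw [Finset.mem_filter, Finset.mem_powerset] at hT
      obtain ⟨hTA, hTne⟩ := hT
      rw [Finset.mem_filter]
      refine ⟨Finset.mem_univ _, ?_, ?_⟩
      · ext y
        rw [Finset.mem_inter, Finset.mem_insert, Finset.mem_singleton]
        constructor
        · rintro ⟨hyA, hy | hy⟩
          · exact hy
          · exact absurd hyA (Finset.mem_compl.mp (hTA hy))
        · rintro rfl; exact ⟨hx, Or.inl rfl⟩
      · obtain ⟨y, hy⟩ := hTne
        exact ⟨y, Finset.mem_inter.mpr ⟨hTA hy, Finset.mem_insert_of_mem hy⟩⟩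
    · intro M hM
      rw [Finset.mem_filter] at hM
      have hxM : x ∈ M := (Finset.mem_inter.mp (hM.2.1 ▸ Finset.mem_singleton_self x)).2
      exact Finset.insert_erase hxM
    · intro T hT
      rw [Finset.mem_filter, Finset.mem_powerset] at hT
      apply Finset.erase_insert
      intro hxT
      exact (Finset.mem_compl.mp (hT.1 hxT)) hx
    · intro M hM
      rw [Finset.mem_filter] at hM
      have hxM : x ∈ M := (Finset.mem_inter.mp (hM.2.1 ▸ Finset.mem_singleton_self x)).2
      have hcard : (M.erase x).card = M.card - 1 := Finset.card_erase_of_mem hxM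
      have hMpos : 1 ≤ M.card := Finset.card_pos.mpr ⟨x, hxM⟩
      have h2 : n - M.card = n - 1 - (M.card - 1) := by omega
      rw [hcard, h2]
  rw [step3]
  -- Step 4: group by cardinality
  have step4 : ∑ T ∈ Aᶜ.powerset.filter (fun T => T.Nonempty),
        (Nat.factorial T.card : ℝ) * (Nat.factorial (n - 1 - T.card) : ℝ)
      = ∑ m ∈ Finset.range (b + 1), (b.choose m) •
          (if m = 0 then (0:ℝ) else (Nat.factorial m : ℝ) * (Nat.factorial (n - 1 - m) : ℝ)) := by
    rw [Finset.sum_filter]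
    have : ∀ T ∈ Aᶜ.powerset,
        (if T.Nonempty then (Nat.factorial T.card : ℝ) * (Nat.factorial (n - 1 - T.card) : ℝ) else 0)
        = (fun m => if m = 0 then (0:ℝ) else (Nat.factorial m : ℝ) * (Nat.factorial (n - 1 - m) : ℝ)) T.card := by
      intro T _
      by_cases hT : T.Nonempty
      · simp [hT, Finset.card_ne_zero.mpr hT]
      · rw [Finset.not_nonempty_iff_eq_empty] at hT
        simp [hT]
    rw [Finset.sum_congr rfl this]
    exact Finset.sum_powerset_apply_card (fun m => if m = 0 then (0:ℝ) else (Nat.factorial m : ℝ) * (Nat.factorial (n - 1 - m) : ℝ))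
  rw [step4]
  -- Step 5: shift the sum and apply tele
  have step5 : ∑ m ∈ Finset.range (b + 1), (b.choose m) •
          (if m = 0 then (0:ℝ) else (Nat.factorial m : ℝ) * (Nat.factorial (n - 1 - m) : ℝ))
      = ∑ j ∈ Finset.range b,
          ((b.choose (j+1) * (j+1).factorial * (a + b - 2 - j).factorial : ℕ) : ℝ) := by
    rw [Finset.sum_range_succ']
    rw [if_pos rfl, smul_zero, add_zero]
    apply Finset.sum_congr rfl
    intro j hj
    have h8 : n - 1 - (j + 1) = a + b - 2 - j := by omega
    rw [if_neg (Nat.succ_ne_zero j), h8]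
    push_cast
    ring
  rw [step5]
  -- Step 6: conclude
  have htele := tele a b ha1 hb1
  have hane : (a : ℝ) ≠ 0 := Nat.cast_ne_zero.mpr (by omega)
  have hnpos : 1 ≤ n := by omega
  have hnfac : (n.factorial : ℝ) = n * (n - 1).factorial := by
    obtain ⟨m, hm⟩ : ∃ m, n = m + 1 := ⟨n - 1, by omega⟩
    rw [hm]
    simp [Nat.factorial_succ]
  have hsum : ∑ j ∈ Finset.range b,
      ((b.choose (j+1) * (j+1).factorial * (a + b - 2 - j).factorial : ℕ) : ℝ)
      = (b * (a + b - 1).factorial : ℕ) / a := by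
    rw [eq_div_iff hane, mul_comm]
    exact htele
  rw [hsum]
  have h1 : a + b - 1 = n - 1 := by omega
  rw [h1]
  have hfacne : ((n-1).factorial : ℝ) ≠ 0 := Nat.cast_ne_zero.mpr (Nat.factorial_ne_zero _)
  have hnne : (n : ℝ) ≠ 0 := Nat.cast_ne_zero.mpr (by omega)
  push_cast
  rw [hnfac]
  field_simp

/-- For a split system `𝒮` and the map `τ` with `(τ λ)(C) = (|X∖C|/|X|)·λ(C|(X∖C))`,
the fair proportion index of `τ λ` on `𝒞(𝒮)` equals the Shapley value of `PD_λ`. -/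
theorem stmt10 {α : Type*} [Fintype α] [DecidableEq α] [Nonempty α]
    (𝒮 : Finset (Finset (Finset α))) (h𝒮 : 𝒮.Nonempty)
    (h𝒮' : ∀ S ∈ 𝒮, IsSplit S)
    (τ : (↥𝒮 → ℝ) → (↥(Cl 𝒮) → ℝ))
    (hτ : ∀ (lam : ↥𝒮 → ℝ) (C : ↥(Cl 𝒮))
        (hS : ({C.1, C.1ᶜ} : Finset (Finset α)) ∈ 𝒮),
      τ lam C = ((C.1ᶜ.card : ℝ) / (Fintype.card α : ℝ)) * lam ⟨{C.1, C.1ᶜ}, hS⟩) :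
    ∀ lam : ↥𝒮 → ℝ, FPfun (Cl 𝒮) (τ lam) = SV (PDs 𝒮 lam) := by
  intro lam
  funext x
  classical
  -- splits have the form {A, Aᶜ}
  have hsplit : ∀ S ∈ 𝒮, ∃ A : Finset α, A.Nonempty ∧ Aᶜ.Nonempty ∧ S = {A, Aᶜ} := by
    intro S hS
    obtain ⟨A, B, hA, hB, hun, hint, rfl⟩ := h𝒮' S hS
    have hB' : B = Aᶜ := by
      ext y
      simp only [Finset.mem_compl]
      constructor
      · intro hyB hyA
        have : y ∈ A ∩ B := Finset.mem_inter.mpr ⟨hyA, hyB⟩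
        rw [hint] at this
        exact absurd this (Finset.notMem_empty y)
      · intro hyA
        have : y ∈ A ∪ B := hun ▸ Finset.mem_univ y
        rcases Finset.mem_union.mp this with h | h
        · exact absurd h hyA
        · exact h
    exact ⟨A, hA, hB' ▸ hB, by rw [hB']⟩
  have hne : ∀ A : Finset α, A.Nonempty → A ≠ Aᶜ := by
    intro A hA h
    obtain ⟨y, hy⟩ := hA
    exact (Finset.mem_compl.mp (h ▸ hy)) hy
  have huniq : ∀ S ∈ 𝒮, ∀ C ∈ S, S = ({C, Cᶜ} : Finset (Finset α)) := by
    intro S hS C hCS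
    obtain ⟨A, hA, hAc, rfl⟩ := hsplit S hS
    rcases Finset.mem_insert.mp hCS with rfl | h
    · rfl
    · rw [Finset.mem_singleton] at h
      subst h
      rw [compl_compl, Finset.pair_comm]
  have hCmem : ∀ C ∈ Cl 𝒮, ({C, Cᶜ} : Finset (Finset α)) ∈ 𝒮 := by
    intro C hC
    rw [Cl, Finset.mem_biUnion] at hC
    obtain ⟨S, hS, hCS⟩ := hC
    rw [← huniq S hS C hCS]
    exact hS
  -- the common summand
  set F : Finset α → ℝ := fun C =>
    if h : ({C, Cᶜ} : Finset (Finset α)) ∈ 𝒮 then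
      (if x ∈ C then ((Cᶜ.card : ℝ) / (Fintype.card α : ℝ)) * lam ⟨{C, Cᶜ}, h⟩ / (C.card : ℝ)
       else 0)
    else 0 with hF
  -- LHS
  have L1 : FPfun (Cl 𝒮) (τ lam) x = ∑ C ∈ Cl 𝒮, F C := by
    rw [FPfun, ← Finset.sum_coe_sort (Cl 𝒮) F]
    apply Finset.sum_congr rfl
    intro C _
    have h := hCmem C.1 C.2
    rw [hτ lam C h]
    simp only [hF, dif_pos h]
  have hdisj : (↑𝒮 : Set (Finset (Finset α))).PairwiseDisjoint (id : Finset (Finset α) → Finset (Finset α)) := by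
    intro S hS S' hS' hSS'
    simp only [Function.onFun, id]
    rw [Finset.disjoint_left]
    intro C hCS hCS'
    exact hSS' ((huniq S (Finset.mem_coe.mp hS) C hCS).trans
      (huniq S' (Finset.mem_coe.mp hS') C hCS').symm)
  have L2 : ∑ C ∈ Cl 𝒮, F C = ∑ S ∈ 𝒮, ∑ C ∈ S, F C := by
    rw [Cl, Finset.sum_biUnion hdisj]
    rfl
  -- RHS : linearity of SV
  have R1 : SV (PDs 𝒮 lam) x = ∑ S : ↥𝒮,
      lam S * SV (fun M => if ∀ P ∈ S.1, (P ∩ M).Nonempty then (1:ℝ) else 0) x := by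
    simp only [SV, PDs, ← Finset.sum_sub_distrib, Finset.mul_sum]
    rw [Finset.sum_comm]
    apply Finset.sum_congr rfl
    intro S _
    apply Finset.sum_congr rfl
    intro M _
    by_cases h1 : ∀ P ∈ S.1, (P ∩ M).Nonempty <;>
      by_cases h2 : ∀ P ∈ S.1, (P ∩ M.erase x).Nonempty
    · rw [if_pos h1, if_pos h1, if_pos h2, if_pos h2]; ring
    · rw [if_pos h1, if_pos h1, if_neg h2, if_neg h2]; ring
    · rw [if_neg h1, if_neg h1, if_pos h2, if_pos h2]; ring
    · rw [if_neg h1, if_neg h1, if_neg h2, if_neg h2]; ring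
  -- per split identity
  have key : ∀ S : ↥𝒮,
      lam S * SV (fun M => if ∀ P ∈ S.1, (P ∩ M).Nonempty then (1:ℝ) else 0) x
        = ∑ C ∈ S.1, F C := by
    intro S
    obtain ⟨A, hA, hAc, hSA⟩ := hsplit S.1 S.2
    have hgood : ∃ A : Finset α, x ∈ A ∧ Aᶜ.Nonempty ∧ S.1 = {A, Aᶜ} := by
      by_cases hxA : x ∈ A
      · exact ⟨A, hxA, hAc, hSA⟩
      · refine ⟨Aᶜ, Finset.mem_compl.mpr hxA, by rw [compl_compl]; exact hA, ?_⟩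
        rw [compl_compl, Finset.pair_comm]
        exact hSA
    clear hSA hA hAc
    obtain ⟨A, hxA, hAc, hSA⟩ := hgood
    have hAne : A ≠ Aᶜ := hne A ⟨x, hxA⟩
    rw [hSA, Finset.sum_pair hAne]
    have hxAc : x ∉ Aᶜ := by simp [hxA]
    have hFAc : F Aᶜ = 0 := by
      simp [hF, hxAc]
    have hSmem : ({A, Aᶜ} : Finset (Finset α)) ∈ 𝒮 := hSA ▸ S.2
    have hFA : F A = ((Aᶜ.card : ℝ) / (Fintype.card α : ℝ)) * lam ⟨{A, Aᶜ}, hSmem⟩ / (A.card : ℝ) := by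
      simp only [hF, dif_pos hSmem, if_pos hxA]
    have hlam : (⟨{A, Aᶜ}, hSmem⟩ : ↥𝒮) = S := Subtype.ext hSA.symm
    rw [hFA, hFAc, add_zero, hlam]
    have hg : (fun M => if ∀ P ∈ ({A, Aᶜ} : Finset (Finset α)), (P ∩ M).Nonempty then (1:ℝ) else 0)
        = (fun M => if (A ∩ M).Nonempty ∧ (Aᶜ ∩ M).Nonempty then (1:ℝ) else 0) := by
      funext M
      simp only [Finset.mem_insert, Finset.mem_singleton, forall_eq_or_imp, forall_eq]
    rw [hg, shapley_split A x hxA hAc]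
    ring
  rw [L1, L2, ← Finset.sum_coe_sort 𝒮 (fun S => ∑ C ∈ S, F C), R1]
  exact (Finset.sum_congr rfl fun S _ => key S).symm
end

section
/- Let 𝒮 be a split system on a nonempty finite set X, let Φ be the equal splits index on 𝒞(𝒮), and let τ : 𝕃(𝒮) → 𝕃(𝒞(𝒮)) be defined by (τ(λ))(C) = (1/2)·λ(C|(X∖C)) for each C ∈ 𝒞(𝒮). Then Ψ_τ(Φ) = Φ∘τ is a complete linear phylogenetic diversity index on 𝒮; that is, it is ℝ-linear and Σ_{x∈X} ((Ψ_τ(Φ))(λ))(x) = Σ_{S∈𝒮} λ(S) holds for all λ ∈ 𝕃(𝒮). -/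
open Finset

/-- The set of children of a cluster `C` in a cluster system `𝒞`. -/
def ch {α : Type*} [DecidableEq α] (𝒞 : Finset (Finset α)) (C : Finset α) :
    Finset (Finset α) :=
  𝒞.filter fun C' => C' ⊂ C ∧ ∀ C'' ∈ 𝒞, ¬(C' ⊂ C'' ∧ C'' ⊂ C)

/-- The elements of `C` not contained in any child of `C`. -/
def cl {α : Type*} [DecidableEq α] (𝒞 : Finset (Finset α)) (C : Finset α) :
    Finset α :=
  C.filter fun x => ∀ C' ∈ ch 𝒞 C, x ∉ C'

/-- The equal splits coefficients `m_x(C)`, defined recursively. -/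
noncomputable def m {α : Type*} [DecidableEq α] (𝒞 : Finset (Finset α)) (x : α)
    (C : Finset α) : ℝ :=
  if x ∉ C then 0
  else if x ∈ cl 𝒞 C then 1 / (((ch 𝒞 C).card : ℝ) + ((cl 𝒞 C).card : ℝ))
  else ∑ C' ∈ (ch 𝒞 C).attach,
    m 𝒞 x C'.1 / (((ch 𝒞 C).card : ℝ) + ((cl 𝒞 C).card : ℝ))
termination_by C.card
decreasing_by
  have h : C'.1 ⊂ C := by
    have h2 := C'.2
    simp only [ch, Finset.mem_filter] at h2
    exact h2.2.1
  exact Finset.card_lt_card h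

/-- The equal splits index on a cluster system `𝒞`. -/
noncomputable def ES {α : Type*} [DecidableEq α] (𝒞 : Finset (Finset α))
    (ω : ↥𝒞 → ℝ) (x : α) : ℝ :=
  ∑ C : ↥𝒞, m 𝒞 x C.1 * ω C

/-!
The equal splits coefficients of a nonempty cluster sum to `1` over `X`, so summing `ES ω` over
`X` returns `∑ C, ω C`. For `ω = τ λ`, each split `C | Cᶜ` of `𝒮` is reached through both of its
parts, each carrying `λ (C | Cᶜ) / 2`.
-/

section EqualSplits

variable {α : Type*} [DecidableEq α] (𝒞 : Finset (Finset α)) {x : α} {C C' : Finset α}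

lemma ssubset_of_mem_ch (h : C' ∈ ch 𝒞 C) : C' ⊂ C :=
  (mem_filter.1 h).2.1

lemma mem_of_mem_ch (h : C' ∈ ch 𝒞 C) : C' ∈ 𝒞 :=
  (mem_filter.1 h).1

lemma cl_subset : cl 𝒞 C ⊆ C :=
  filter_subset _ _

lemma notMem_of_mem_cl_of_mem_ch (hx : x ∈ cl 𝒞 C) (h : C' ∈ ch 𝒞 C) : x ∉ C' :=
  (mem_filter.1 hx).2 C' h

lemma subset_sdiff_cl_of_mem_ch (h : C' ∈ ch 𝒞 C) : C' ⊆ C \ cl 𝒞 C := fun _ hx =>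
  mem_sdiff.2 ⟨(ssubset_of_mem_ch 𝒞 h).1 hx, fun hcl => notMem_of_mem_cl_of_mem_ch 𝒞 hcl h hx⟩

lemma m_of_notMem (h : x ∉ C) : m 𝒞 x C = 0 := by
  rw [m, if_pos h]

lemma m_of_mem_cl (h : x ∈ cl 𝒞 C) :
    m 𝒞 x C = 1 / ((#(ch 𝒞 C) : ℝ) + #(cl 𝒞 C)) := by
  rw [m, if_neg (not_not.2 (cl_subset 𝒞 h)), if_pos h]

lemma m_of_mem_sdiff_cl (h : x ∈ C \ cl 𝒞 C) :
    m 𝒞 x C = ∑ D ∈ (ch 𝒞 C).attach, m 𝒞 x D.1 / ((#(ch 𝒞 C) : ℝ) + #(cl 𝒞 C)) := by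
  obtain ⟨hC, hcl⟩ := mem_sdiff.1 h
  rw [m, if_neg (not_not.2 hC), if_neg hcl]

lemma sum_m_of_subset {s : Finset α} (h : C ⊆ s) : ∑ y ∈ s, m 𝒞 y C = ∑ y ∈ C, m 𝒞 y C :=
  (sum_subset h fun _ _ hy => m_of_notMem 𝒞 hy).symm

lemma ch_nonempty_or_cl_nonempty (hC : C.Nonempty) : (ch 𝒞 C).Nonempty ∨ (cl 𝒞 C).Nonempty := by
  by_contra! h
  obtain ⟨hch, hcl⟩ := h
  have : cl 𝒞 C = C := by simp [cl, hch]
  exact hC.ne_empty (this ▸ hcl)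

lemma card_ch_add_card_cl_pos (hC : C.Nonempty) : (0 : ℝ) < #(ch 𝒞 C) + #(cl 𝒞 C) := by
  rcases ch_nonempty_or_cl_nonempty 𝒞 hC with h | h <;>
  · have := h.card_pos
    positivity

/-- Each cluster hands its unit mass in equal shares to its children and its own elements. -/
lemma sum_m_self (h𝒞 : ∀ D ∈ 𝒞, D.Nonempty) (hC : C.Nonempty) : ∑ y ∈ C, m 𝒞 y C = 1 := by
  induction C using Finset.strongInduction with
  | _ C ih =>
    set k : ℝ := #(ch 𝒞 C) + #(cl 𝒞 C)
    have hk_pos : 0 < k := card_ch_add_card_cl_pos 𝒞 hC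
    have hcl : ∑ y ∈ cl 𝒞 C, m 𝒞 y C = #(cl 𝒞 C) / k := by
      rw [sum_congr rfl fun y hy => m_of_mem_cl 𝒞 hy, sum_const, nsmul_eq_mul, mul_one_div]
    have hch : ∑ y ∈ C \ cl 𝒞 C, m 𝒞 y C = #(ch 𝒞 C) / k := by
      have hchild : ∀ D ∈ (ch 𝒞 C).attach, ∑ y ∈ C \ cl 𝒞 C, m 𝒞 y D.1 / k = 1 / k := by
        intro D _
        rw [← sum_div, sum_m_of_subset 𝒞 (subset_sdiff_cl_of_mem_ch 𝒞 D.2),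
          ih D.1 (ssubset_of_mem_ch 𝒞 D.2) (h𝒞 D.1 (mem_of_mem_ch 𝒞 D.2))]
      rw [sum_congr rfl fun y hy => m_of_mem_sdiff_cl 𝒞 hy, sum_comm, sum_congr rfl hchild,
        sum_const, card_attach, nsmul_eq_mul, mul_one_div]
    rw [← sum_sdiff (cl_subset 𝒞), hcl, hch, ← add_div, div_self hk_pos.ne']

lemma ES_add (ω₁ ω₂ : 𝒞 → ℝ) : ES 𝒞 (ω₁ + ω₂) = ES 𝒞 ω₁ + ES 𝒞 ω₂ := by
  funext x
  simp only [ES, Pi.add_apply, mul_add, sum_add_distrib]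

lemma ES_smul (a : ℝ) (ω : 𝒞 → ℝ) : ES 𝒞 (a • ω) = a • ES 𝒞 ω := by
  funext x
  simp only [ES, Pi.smul_apply, smul_eq_mul, mul_sum]
  exact sum_congr rfl fun _ _ => by ring

variable [Fintype α]

lemma sum_m (h𝒞 : ∀ D ∈ 𝒞, D.Nonempty) (hC : C.Nonempty) : ∑ y, m 𝒞 y C = 1 := by
  rw [sum_m_of_subset 𝒞 (subset_univ C), sum_m_self 𝒞 h𝒞 hC]

lemma sum_ES (h𝒞 : ∀ D ∈ 𝒞, D.Nonempty) (ω : 𝒞 → ℝ) : ∑ y, ES 𝒞 ω y = ∑ D, ω D := by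
  simp only [ES]
  rw [sum_comm]
  exact sum_congr rfl fun D _ => by rw [← sum_mul, sum_m 𝒞 h𝒞 (h𝒞 D.1 D.2), one_mul]

end EqualSplits

section Splits

variable {α : Type*} [Fintype α] [DecidableEq α] {S : Finset (Finset α)} {C : Finset α}

lemma IsSplit.exists_eq_pair_compl (hS : IsSplit S) :
    ∃ A : Finset α, A.Nonempty ∧ Aᶜ.Nonempty ∧ S = {A, Aᶜ} := by
  obtain ⟨A, B, hA, hB, hAB, hAB', rfl⟩ := hS
  have hBA : Aᶜ = B :=
    IsCompl.compl_eq ⟨disjoint_iff_inter_eq_empty.2 hAB', codisjoint_iff.2 hAB⟩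
  exact ⟨A, hA, hBA ▸ hB, hBA ▸ rfl⟩

lemma IsSplit.eq_pair_compl (hS : IsSplit S) (hC : C ∈ S) : S = {C, Cᶜ} := by
  obtain ⟨A, -, -, rfl⟩ := hS.exists_eq_pair_compl
  rcases mem_insert.1 hC with rfl | hC
  · rfl
  · rw [mem_singleton.1 hC, compl_compl, pair_comm]

lemma IsSplit.nonempty_of_mem (hS : IsSplit S) (hC : C ∈ S) : C.Nonempty := by
  obtain ⟨A, hA, hAc, rfl⟩ := hS.exists_eq_pair_compl
  rcases mem_insert.1 hC with rfl | hC
  exacts [hA, mem_singleton.1 hC ▸ hAc]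

lemma IsSplit.card_eq_two (hS : IsSplit S) : #S = 2 := by
  obtain ⟨A, ⟨a, -⟩, -, rfl⟩ := hS.exists_eq_pair_compl
  have : Nontrivial (Finset α) := ⟨⟨∅, {a}, (singleton_ne_empty a).symm⟩⟩
  exact card_pair ne_compl_self

variable {𝒮 : Finset (Finset (Finset α))}

lemma nonempty_of_mem_Cl (h𝒮 : ∀ S ∈ 𝒮, IsSplit S) (hC : C ∈ Cl 𝒮) : C.Nonempty := by
  obtain ⟨S, hS, hCS⟩ := mem_biUnion.1 hC
  exact (h𝒮 S hS).nonempty_of_mem hCS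

lemma pair_compl_mem_of_mem_Cl (h𝒮 : ∀ S ∈ 𝒮, IsSplit S) (hC : C ∈ Cl 𝒮) :
    {C, Cᶜ} ∈ 𝒮 := by
  obtain ⟨S, hS, hCS⟩ := mem_biUnion.1 hC
  exact (h𝒮 S hS).eq_pair_compl hCS ▸ hS

lemma sum_Cl_eq_sum (h𝒮 : ∀ S ∈ 𝒮, IsSplit S) (f : Finset (Finset α) → ℝ) :
    ∑ C ∈ Cl 𝒮, f {C, Cᶜ} / 2 = ∑ S ∈ 𝒮, f S := by
  have hdisj : (𝒮 : Set (Finset (Finset α))).PairwiseDisjoint id := by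
    intro S hS T hT hST
    refine disjoint_left.2 fun C hCS hCT => hST ?_
    rw [(h𝒮 S hS).eq_pair_compl hCS, (h𝒮 T hT).eq_pair_compl hCT]
  rw [Cl, sum_biUnion hdisj]
  refine sum_congr rfl fun S hS => ?_
  change ∑ C ∈ S, f {C, Cᶜ} / 2 = f S
  rw [sum_congr rfl fun C hC => by rw [← (h𝒮 S hS).eq_pair_compl hC], sum_const,
    (h𝒮 S hS).card_eq_two, nsmul_eq_mul]
  ring

end Splits

theorem stmt15_general {α : Type*} [Fintype α] [DecidableEq α]
    (𝒮 : Finset (Finset (Finset α)))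
    (h𝒮' : ∀ S ∈ 𝒮, IsSplit S)
    (τ : (↥𝒮 → ℝ) → (↥(Cl 𝒮) → ℝ))
    (hτ : ∀ (lam : ↥𝒮 → ℝ) (C : ↥(Cl 𝒮))
        (hS : ({C.1, C.1ᶜ} : Finset (Finset α)) ∈ 𝒮),
      τ lam C = (1 / 2) * lam ⟨{C.1, C.1ᶜ}, hS⟩) :
    -- Ψ_τ(Φ) is linear
    (∀ (a : ℝ) (lam₁ lam₂ : ↥𝒮 → ℝ),
        ES (Cl 𝒮) (τ (a • lam₁ + lam₂))
          = a • ES (Cl 𝒮) (τ lam₁) + ES (Cl 𝒮) (τ lam₂))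
    -- Ψ_τ(Φ) is complete
    ∧ (∀ lam : ↥𝒮 → ℝ, ∑ x : α, ES (Cl 𝒮) (τ lam) x = ∑ S : ↥𝒮, lam S) := by
  have hτ' : ∀ lam C, τ lam C = lam ⟨_, pair_compl_mem_of_mem_Cl h𝒮' C.2⟩ / 2 := fun lam C => by
    rw [hτ lam C (pair_compl_mem_of_mem_Cl h𝒮' C.2), one_div_mul_eq_div]
  refine ⟨fun a lam₁ lam₂ => ?_, fun lam => ?_⟩
  · have hτ_linear : τ (a • lam₁ + lam₂) = a • τ lam₁ + τ lam₂ := by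
      funext C
      simp only [hτ', Pi.add_apply, Pi.smul_apply, smul_eq_mul]
      ring
    rw [hτ_linear, ES_add, ES_smul]
  · let f : Finset (Finset α) → ℝ := fun S => if h : S ∈ 𝒮 then lam ⟨S, h⟩ else 0
    calc ∑ x, ES (Cl 𝒮) (τ lam) x
        = ∑ C : Cl 𝒮, τ lam C := sum_ES _ (fun _ => nonempty_of_mem_Cl h𝒮') _
      _ = ∑ C ∈ Cl 𝒮, f {C, Cᶜ} / 2 := by
        rw [← sum_coe_sort (Cl 𝒮) fun C => f {C, Cᶜ} / 2]
        exact sum_congr rfl fun C _ => by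
          simp only [hτ', f, dif_pos (pair_compl_mem_of_mem_Cl h𝒮' C.2)]
      _ = ∑ S ∈ 𝒮, f S := sum_Cl_eq_sum h𝒮' f
      _ = ∑ S : 𝒮, lam S := by
        rw [← sum_coe_sort 𝒮 f]
        exact sum_congr rfl fun S _ => dif_pos S.2

/-- If `Φ` is the equal splits index on `𝒞(𝒮)` and `(τ λ)(C) = (1/2)·λ(C|(X∖C))`,
then `Ψ_τ(Φ) = Φ ∘ τ` is a complete linear phylogenetic diversity index on `𝒮`. -/
theorem stmt15 {α : Type*} [Fintype α] [DecidableEq α] [Nonempty α]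
    (𝒮 : Finset (Finset (Finset α))) (h𝒮 : 𝒮.Nonempty)
    (h𝒮' : ∀ S ∈ 𝒮, IsSplit S)
    (τ : (↥𝒮 → ℝ) → (↥(Cl 𝒮) → ℝ))
    (hτ : ∀ (lam : ↥𝒮 → ℝ) (C : ↥(Cl 𝒮))
        (hS : ({C.1, C.1ᶜ} : Finset (Finset α)) ∈ 𝒮),
      τ lam C = (1 / 2) * lam ⟨{C.1, C.1ᶜ}, hS⟩) :
    -- Ψ_τ(Φ) is linear
    (∀ (a : ℝ) (lam₁ lam₂ : ↥𝒮 → ℝ),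
        ES (Cl 𝒮) (τ (a • lam₁ + lam₂))
          = a • ES (Cl 𝒮) (τ lam₁) + ES (Cl 𝒮) (τ lam₂))
    -- Ψ_τ(Φ) is complete
    ∧ (∀ lam : ↥𝒮 → ℝ, ∑ x : α, ES (Cl 𝒮) (τ lam) x = ∑ S : ↥𝒮, lam S) :=
  stmt15_general 𝒮 h𝒮' τ hτ
end
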